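/- If the Conrad filter N of an MV-algebra is proper, then there is exactly one maximal proper implication filter, namely the unique maximal implication filter containing N. -/

import Mathlib

/-- An MV-algebra `(α, ⊕, ¬, 0)` with the standard axioms. -/
class MV (α : Type*) extends Add α, Neg α, Zero α where
  add_assoc : ∀ a b c : α, a + (b + c) = (a + b) + c
  add_comm : ∀ a b : α, a + b = b + a
  add_zero : ∀ a : α, a + 0 = a
  neg_neg : ∀ a : α, - -a = a
  add_neg_zero : ∀ a : α, a + -(0 : α) = -(0 : α)
  luk : ∀ a b : α, -(-a + b) + b = -(-b + a) + a

namespace MV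

variable {α : Type*} [MV α]

/-- The top element `1 = ¬0`. -/
def one (α : Type*) [MV α] : α := -(0 : α)

/-- Implication `x → y = ¬x ⊕ y`. -/
def imp (a b : α) : α := -a + b

/-- Strong conjunction `x ⊗ y = ¬(¬x ⊕ ¬y)`. -/
def otimes (a b : α) : α := -(-a + -b)

/-- Join `x ∨ y = (x → y) → y`. -/
def sup (a b : α) : α := imp (imp a b) b

/-- Meet `x ∧ y = ¬(¬x ∨ ¬y)`. -/
def inf (a b : α) : α := -(sup (-a) (-b))

/-- Order: `x ≤ y` iff `x → y = 1`. -/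
def le (a b : α) : Prop := imp a b = one α

/-- Strict order. -/
def lt (a b : α) : Prop := le a b ∧ a ≠ b

/-- `n`-fold `⊗`-power. -/
def pow (a : α) : ℕ → α
  | 0 => one α
  | n + 1 => otimes a (pow a n)

/-- An implication filter: a lattice filter closed under `⊗`. -/
def IsImpFilter (F : Set α) : Prop :=
  one α ∈ F ∧ (∀ x ∈ F, ∀ y : α, le x y → y ∈ F) ∧
    (∀ x ∈ F, ∀ y ∈ F, inf x y ∈ F) ∧ (∀ x ∈ F, ∀ y ∈ F, otimes x y ∈ F)

/-- A prime implication filter: proper and `x ∨ y ∈ F → x ∈ F ∨ y ∈ F`. -/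
def IsPrime (F : Set α) : Prop :=
  IsImpFilter F ∧ F ≠ Set.univ ∧ ∀ x y : α, sup x y ∈ F → x ∈ F ∨ y ∈ F

/-- A minimal prime implication filter. -/
def IsMinimalPrime (F : Set α) : Prop :=
  IsPrime F ∧ ∀ G : Set α, IsPrime G → G ⊆ F → G = F

/-- A maximal proper implication filter. -/
def IsMaximal (F : Set α) : Prop :=
  IsImpFilter F ∧ F ≠ Set.univ ∧
    ∀ G : Set α, IsImpFilter G → G ≠ Set.univ → F ⊆ G → G = F

/-- A counit: `u < 1` joining to `1` with some `v < 1`. -/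
def IsCounit (u : α) : Prop :=
  lt u (one α) ∧ ∃ v : α, lt v (one α) ∧ sup u v = one α

/-- The implication filter generated by a set. -/
def gen (S : Set α) : Set α := ⋂₀ {F : Set α | IsImpFilter F ∧ S ⊆ F}

/-- The Conrad filter: the implication filter generated by all counits. -/
def conrad (α : Type*) [MV α] : Set α := gen {u : α | IsCounit u}

/-- The localizing filter `ℓ(P)`, generated by `{x → p : p ∈ P, x ∉ P}`. -/
def locFilter (P : Set α) : Set α :=
  gen {z : α | ∃ x : α, x ∉ P ∧ ∃ p ∈ P, z = imp x p}

end MV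

/-!
If an implication filter `M` misses a counit `u` (say `u ∨ v = 1` with `v < 1`), then `M ⊆ N`:
for `p ∈ M`, both `p ∨ u ≥ u` and `u → p` lie in `N` (the latter since `(u → p) ∨ (p → u) = 1`
and `p → u ∉ M`), and `(p ∨ u) ⊗ (u → p) ≤ p`. So every filter is comparable with `N`, and a
maximal filter contains `N` once `N` is proper. Prelinearity also makes a filter `F ⊇ N` comparable
with every filter `G`: for `a ∈ F \ G` and `b ∈ G \ F`, `b → a ∉ G` puts `a → b` in `N ⊆ F`, so
`b ∈ F`. Hence two maximal filters coincide; existence is Zorn's lemma.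
-/

namespace MV

variable {α : Type*} [MV α]

lemma add_one (a : α) : a + one α = one α := add_neg_zero a

lemma zero_add (a : α) : (0 : α) + a = a := by rw [MV.add_comm]; exact MV.add_zero a

lemma neg_one : -(one α) = (0 : α) := MV.neg_neg 0

lemma add_left_comm (a b c : α) : a + (b + c) = b + (a + c) := by
  rw [MV.add_assoc, MV.add_comm a b, ← MV.add_assoc]

lemma neg_add_self (a : α) : -a + a = one α := by
  simpa only [neg_one, zero_add, add_one] using luk (one α) a

lemma le_refl (a : α) : le a a := neg_add_self a

lemma le_one (a : α) : le a (one α) := add_one (-a)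

lemma zero_le (a : α) : le 0 a := by
  show -(0 : α) + a = one α
  rw [MV.add_comm]; exact add_neg_zero a

lemma le_add_left (a b : α) : le b (a + b) := by
  show -b + (a + b) = one α
  rw [add_left_comm, neg_add_self, add_one]

lemma le_sup_left (a b : α) : le a (sup a b) := by
  show -a + (-(-a + b) + b) = one α
  rw [add_left_comm, neg_add_self]

lemma le_sup_right (a b : α) : le b (sup a b) := le_add_left _ _

lemma sup_comm (a b : α) : sup a b = sup b a := luk a b

lemma sup_eq_right {a b : α} (h : le a b) : sup a b = b := by
  show -(-a + b) + b = b
  rw [show -a + b = one α from h, neg_one, zero_add]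

lemma neg_otimes (a b : α) : -(otimes a b) = -a + -b := MV.neg_neg _

lemma otimes_assoc (a b c : α) : otimes (otimes a b) c = otimes a (otimes b c) := by
  show -(-(otimes a b) + -c) = -(-a + -(otimes b c))
  rw [neg_otimes, neg_otimes, MV.add_assoc]

lemma imp_otimes (a b c : α) : imp (otimes a b) c = imp a (imp b c) := by
  show -(otimes a b) + c = -a + (-b + c)
  rw [neg_otimes, ← MV.add_assoc]

lemma otimes_le_of_le_imp {a b c : α} (h : le a (imp b c)) : le (otimes a b) c := by
  show imp (otimes a b) c = one α
  rw [imp_otimes]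
  exact h

lemma otimes_imp_le (a b : α) : le (otimes a (imp a b)) b :=
  otimes_le_of_le_imp (le_sup_left a b)

lemma otimes_imp_eq_of_le {b c : α} (h : le b c) : otimes c (imp c b) = b := by
  have hneg : le (-c) (-b) := by
    show -(-c) + -b = one α
    rw [MV.neg_neg, MV.add_comm]
    exact h
  have key : -(b + -c) + -c = -b := by
    simpa only [sup, imp, MV.neg_neg] using (sup_comm (-b) (-c)).trans (sup_eq_right hneg)
  show -(-c + -(-c + b)) = b
  rw [MV.add_comm (-c) b, MV.add_comm (-c), key, MV.neg_neg]

lemma imp_sup_left (a b : α) : imp (sup a b) a = imp b a := by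
  have h := luk a (-b + a)
  rw [show -a + (-b + a) = one α by rw [add_left_comm, neg_add_self, add_one], neg_one, zero_add,
    show -(-b + a) + a = sup a b from sup_comm b a] at h
  exact h.symm

lemma otimes_sup_neg (a b : α) : otimes (sup a b) (-a) = otimes b (-a) := by
  show -(-(sup a b) + -(-a)) = -(-b + -(-a))
  rw [MV.neg_neg, show -(sup a b) + a = -b + a from imp_sup_left a b]

lemma imp_otimes_otimes_neg (a b : α) : otimes (imp a b) (otimes b (-a)) = otimes b (-a) := by
  calc otimes (imp a b) (otimes b (-a))
      = otimes (otimes (imp a b) (sup a b)) (-a) := by rw [otimes_assoc, otimes_sup_neg]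
    _ = otimes b (-a) := congrArg (otimes · (-a)) (otimes_imp_eq_of_le (le_add_left (-a) b))

lemma sup_imp_imp (a b : α) : sup (imp a b) (imp b a) = one α := by
  have h := congrArg (fun x => -x) (imp_otimes_otimes_neg a b)
  simp only [neg_otimes, MV.neg_neg] at h
  show imp (imp (imp a b) (imp b a)) (imp b a) = one α
  rw [show imp (imp a b) (imp b a) = imp b a from h]
  exact neg_add_self _

namespace IsImpFilter

variable {F : Set α}

lemma one_mem (hF : IsImpFilter F) : one α ∈ F := hF.1

lemma mem_of_le (hF : IsImpFilter F) {x y : α} (hx : x ∈ F) (h : le x y) : y ∈ F :=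
  hF.2.1 x hx y h

lemma inf_mem (hF : IsImpFilter F) {x y : α} (hx : x ∈ F) (hy : y ∈ F) : inf x y ∈ F :=
  hF.2.2.1 x hx y hy

lemma otimes_mem (hF : IsImpFilter F) {x y : α} (hx : x ∈ F) (hy : y ∈ F) : otimes x y ∈ F :=
  hF.2.2.2 x hx y hy

lemma mem_of_imp_mem (hF : IsImpFilter F) {p q : α} (hp : p ∈ F) (hpq : imp p q ∈ F) : q ∈ F :=
  hF.mem_of_le (hF.otimes_mem hp hpq) (otimes_imp_le p q)

lemma imp_notMem (hF : IsImpFilter F) {p q : α} (hp : p ∈ F) (hq : q ∉ F) : imp p q ∉ F :=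
  fun hpq => hq (hF.mem_of_imp_mem hp hpq)

lemma ne_one_of_notMem (hF : IsImpFilter F) {x : α} (hx : x ∉ F) : x ≠ one α :=
  fun h => hx (h ▸ hF.one_mem)

lemma ne_univ_iff (hF : IsImpFilter F) : F ≠ Set.univ ↔ (0 : α) ∉ F := by
  refine ⟨fun hne h0 => hne ?_, fun h0 he => h0 (he ▸ Set.mem_univ _)⟩
  exact Set.eq_univ_of_forall fun x => hF.mem_of_le h0 (zero_le x)

lemma sUnion_of_isChain {c : Set (Set α)} (hc : IsChain (· ⊆ ·) c) (hne : c.Nonempty)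
    (hF : ∀ F ∈ c, IsImpFilter F) : IsImpFilter (⋃₀ c) := by
  have common : ∀ x ∈ ⋃₀ c, ∀ y ∈ ⋃₀ c, ∃ F ∈ c, x ∈ F ∧ y ∈ F := by
    rintro x ⟨F, hFc, hxF⟩ y ⟨G, hGc, hyG⟩
    obtain ⟨H, hHc, hFH, hGH⟩ := hc.directedOn F hFc G hGc
    exact ⟨H, hHc, hFH hxF, hGH hyG⟩
  obtain ⟨F₀, hF₀⟩ := hne
  refine ⟨⟨F₀, hF₀, (hF F₀ hF₀).one_mem⟩, ?_, ?_, ?_⟩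
  · rintro x ⟨F, hFc, hxF⟩ y hxy
    exact ⟨F, hFc, (hF F hFc).mem_of_le hxF hxy⟩
  · intro x hx y hy
    obtain ⟨F, hFc, hxF, hyF⟩ := common x hx y hy
    exact ⟨F, hFc, (hF F hFc).inf_mem hxF hyF⟩
  · intro x hx y hy
    obtain ⟨F, hFc, hxF, hyF⟩ := common x hx y hy
    exact ⟨F, hFc, (hF F hFc).otimes_mem hxF hyF⟩

lemma exists_isMaximal_superset (hF : IsImpFilter F) (hne : F ≠ Set.univ) :
    ∃ M, F ⊆ M ∧ IsMaximal M := by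
  let S : Set (Set α) := {G | IsImpFilter G ∧ G ≠ Set.univ}
  have chain_bound : ∀ c ⊆ S, IsChain (· ⊆ ·) c → c.Nonempty →
      ∃ ub ∈ S, ∀ G ∈ c, G ⊆ ub := by
    intro c hcS hc hne
    have hU := sUnion_of_isChain hc hne fun G hG => (hcS hG).1
    refine ⟨⋃₀ c, ⟨hU, hU.ne_univ_iff.mpr ?_⟩, fun G hG => Set.subset_sUnion_of_mem hG⟩
    rintro ⟨G, hGc, h0⟩
    exact (hcS hGc).1.ne_univ_iff.mp (hcS hGc).2 h0
  obtain ⟨M, hFM, hM⟩ := zorn_subset_nonempty S chain_bound F ⟨hF, hne⟩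
  exact ⟨M, hFM, hM.prop.1, hM.prop.2,
    fun G hG hGne hMG => (hM.eq_of_subset ⟨hG, hGne⟩ hMG).symm⟩

end IsImpFilter

lemma mem_gen {S : Set α} {x : α} : x ∈ gen S ↔ ∀ F, IsImpFilter F → S ⊆ F → x ∈ F :=
  ⟨fun hx F hF hSF => hx F ⟨hF, hSF⟩, fun hx F hF => hx F hF.1 hF.2⟩

lemma isImpFilter_gen (S : Set α) : IsImpFilter (gen S) := by
  refine ⟨mem_gen.mpr fun F hF _ => hF.one_mem, ?_, ?_, ?_⟩ <;> simp only [mem_gen]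
  · exact fun x hx y hxy F hF hSF => hF.mem_of_le (hx F hF hSF) hxy
  · exact fun x hx y hy F hF hSF => hF.inf_mem (hx F hF hSF) (hy F hF hSF)
  · exact fun x hx y hy F hF hSF => hF.otimes_mem (hx F hF hSF) (hy F hF hSF)

lemma subset_gen (S : Set α) : S ⊆ gen S := fun _ hx => mem_gen.mpr fun _ _ hSF => hSF hx

lemma gen_subset {S F : Set α} (hF : IsImpFilter F) (h : S ⊆ F) : gen S ⊆ F :=
  fun _ hx => mem_gen.mp hx F hF h

lemma isImpFilter_conrad : IsImpFilter (conrad α) := isImpFilter_gen _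

lemma mem_conrad_of_sup_eq_one {u v : α} (huv : sup u v = one α) (hv : v ≠ one α) :
    u ∈ conrad α := by
  by_cases hu : u = one α
  · exact hu ▸ isImpFilter_conrad.one_mem
  · exact subset_gen _ ⟨⟨le_one u, hu⟩, v, ⟨le_one v, hv⟩, huv⟩

lemma subset_conrad_of_notMem {M : Set α} (hM : IsImpFilter M) {u v : α} (huM : u ∉ M)
    (huv : sup u v = one α) (hv : v ≠ one α) : M ⊆ conrad α := by
  intro p hp
  have hu : u ∈ conrad α := mem_conrad_of_sup_eq_one huv hv
  have hpu : sup p u ∈ conrad α := isImpFilter_conrad.mem_of_le hu (le_sup_right p u)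
  have hup : imp u p ∈ conrad α :=
    mem_conrad_of_sup_eq_one (sup_imp_imp u p) (hM.ne_one_of_notMem (hM.imp_notMem hp huM))
  have hle : le (otimes (sup p u) (imp u p)) p := by
    apply otimes_le_of_le_imp
    rw [sup_comm]
    exact le_refl _
  exact isImpFilter_conrad.mem_of_le (isImpFilter_conrad.otimes_mem hpu hup) hle

lemma conrad_subset_or_subset_conrad {M : Set α} (hM : IsImpFilter M) :
    conrad α ⊆ M ∨ M ⊆ conrad α := by
  by_cases hc : {u : α | IsCounit u} ⊆ M
  · exact Or.inl (gen_subset hM hc)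
  · obtain ⟨u, ⟨-, v, ⟨-, hv⟩, huv⟩, huM⟩ := Set.not_subset.mp hc
    exact Or.inr (subset_conrad_of_notMem hM huM huv hv)

lemma subset_or_subset_of_conrad_subset {F G : Set α} (hF : IsImpFilter F) (hG : IsImpFilter G)
    (hNF : conrad α ⊆ F) : F ⊆ G ∨ G ⊆ F := by
  by_contra! h
  obtain ⟨⟨a, haF, haG⟩, ⟨b, hbG, hbF⟩⟩ := And.imp Set.not_subset.mp Set.not_subset.mp h
  have hab : imp a b ∈ conrad α :=
    mem_conrad_of_sup_eq_one (sup_imp_imp a b) (hG.ne_one_of_notMem (hG.imp_notMem hbG haG))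
  exact hF.imp_notMem haF hbF (hNF hab)

namespace IsMaximal

variable {M : Set α}

lemma isImpFilter (hM : IsMaximal M) : IsImpFilter M := hM.1

lemma ne_univ (hM : IsMaximal M) : M ≠ Set.univ := hM.2.1

lemma eq_of_subset (hM : IsMaximal M) {G : Set α} (hG : IsImpFilter G) (hGne : G ≠ Set.univ)
    (hMG : M ⊆ G) : G = M :=
  hM.2.2 G hG hGne hMG

lemma conrad_subset (h : conrad α ≠ Set.univ) (hM : IsMaximal M) : conrad α ⊆ M := by
  rcases conrad_subset_or_subset_conrad hM.isImpFilter with hNM | hMN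
  · exact hNM
  · exact (hM.eq_of_subset isImpFilter_conrad h hMN).le

lemma eq_of_conrad_ne_univ (h : conrad α ≠ Set.univ) {M' : Set α} (hM : IsMaximal M)
    (hM' : IsMaximal M') : M = M' := by
  rcases subset_or_subset_of_conrad_subset hM.isImpFilter hM'.isImpFilter (hM.conrad_subset h)
    with hMM' | hM'M
  · exact (hM.eq_of_subset hM'.isImpFilter hM'.ne_univ hMM').symm
  · exact hM'.eq_of_subset hM.isImpFilter hM.ne_univ hM'M

end IsMaximal

end MV

open MV
/-- If the Conrad filter is proper, there is exactly one maximal proper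
implication filter, namely the unique maximal one containing `N`. -/
theorem unique_maximal_of_conrad_proper {α : Type*} [MV α] (h : conrad α ≠ Set.univ) :
    (∃! M : Set α, IsMaximal M) ∧ ∀ M : Set α, IsMaximal M → conrad α ⊆ M := by
  obtain ⟨M, -, hM⟩ := isImpFilter_conrad.exists_isMaximal_superset h
  exact ⟨⟨M, hM, fun M' hM' => hM'.eq_of_conrad_ne_univ h hM⟩,
    fun M' hM' => hM'.conrad_subset h⟩
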